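/- arXiv:2201.04447 — 7 statements merged into one kernel-verified Lean document; each statement's English description precedes it below -/
import Mathlib

section
/- If f : [a,b] → ℝ is an increasing function on a real interval [a,b] with a,b in a time scale 𝕋, and f restricted to [a,b]∩𝕋 is rd-continuous, then the Riemann integral of f over [a,b] is greater than or equal to the delta (time-scale) integral of f over [a,b]∩𝕋. -/
open MeasureTheory Filter

/-- Forward jump operator of a time scale. -/
noncomputable def tsSigma (T : Set ℝ) (t : ℝ) : ℝ := sInf (T ∩ Set.Ioi t)

/-- `f` is rd-continuous on `s ∩ T`: continuous (within `T`) at right-dense points,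
and finite left-sided limits at left-dense points. -/
def RdContinuousOn (T : Set ℝ) (f : ℝ → ℝ) (s : Set ℝ) : Prop :=
  (∀ t ∈ s ∩ T, t ∈ closure (T ∩ Set.Ioi t) → ContinuousWithinAt f T t) ∧
  (∀ t ∈ s ∩ T, t ∈ closure (T ∩ Set.Iio t) →
    ∃ L : ℝ, Tendsto f (nhdsWithin t (T ∩ Set.Iio t)) (nhds L))

/-- The delta (time-scale, Cauchy) integral of `f` over `[a,b] ∩ T`, realized as the
Riemann integral of `t ↦ f(sup (T ∩ (-∞,t]))` over `[a,b]`. -/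
noncomputable def deltaInt (T : Set ℝ) (a b : ℝ) (f : ℝ → ℝ) : ℝ :=
  ∫ t in a..b, f (sSup (T ∩ Set.Iic t))

/-- If `f : [a,b] → ℝ` is increasing, `a, b` belong to the time scale `T`, and `f`
restricted to `[a,b] ∩ T` is rd-continuous, then the Riemann integral of `f` over `[a,b]`
dominates the delta integral of `f` over `[a,b] ∩ T`. -/
theorem riemann_ge_delta_of_increasing
    (T : Set ℝ) (hTne : T.Nonempty) (hTcl : IsClosed T)
    (a b : ℝ) (ha : a ∈ T) (hb : b ∈ T) (hab : a ≤ b)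
    (f : ℝ → ℝ) (hmono : MonotoneOn f (Set.Icc a b))
    (hrd : RdContinuousOn T f (Set.Icc a b)) :
    deltaInt T a b f ≤ ∫ t in a..b, f t := by
  set g : ℝ → ℝ := fun t => sSup (T ∩ Set.Iic t) with hg
  have hbdd : ∀ t : ℝ, BddAbove (T ∩ Set.Iic t) := fun t =>
    ⟨t, fun x hx => hx.2⟩
  have hge : ∀ t ∈ Set.Icc a b, a ≤ g t := fun t ht =>
    le_csSup (hbdd t) ⟨ha, ht.1⟩
  have hle : ∀ t ∈ Set.Icc a b, g t ≤ t := fun t ht =>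
    csSup_le ⟨a, ha, ht.1⟩ (fun x hx => hx.2)
  have hgmem : ∀ t ∈ Set.Icc a b, g t ∈ Set.Icc a b := fun t ht =>
    ⟨hge t ht, (hle t ht).trans ht.2⟩
  have hgmono : MonotoneOn g (Set.Icc a b) := by
    intro s hs t ht hst
    exact csSup_le_csSup (hbdd t) ⟨a, ha, hs.1⟩
      (Set.inter_subset_inter_right _ (Set.Iic_subset_Iic.mpr hst))
  have hfg : MonotoneOn (fun t => f (g t)) (Set.Icc a b) := by
    intro s hs t ht hst
    exact hmono (hgmem s hs) (hgmem t ht) (hgmono hs ht hst)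
  apply intervalIntegral.integral_mono_on hab
    ((Set.uIcc_of_le hab ▸ hfg).intervalIntegrable)
    ((Set.uIcc_of_le hab ▸ hmono).intervalIntegrable)
  intro t ht
  exact hmono (hgmem t ht) ht (hle t ht)
end

section
/- If f : [a,b] → ℝ is a decreasing function on a real interval [a,b] with a,b in a time scale 𝕋, and f restricted to [a,b]∩𝕋 is rd-continuous, then the Riemann integral of f over [a,b] is less than or equal to the delta (time-scale) integral of f over [a,b]∩𝕋. -/
open MeasureTheory Filter

/-- If `f : [a,b] → ℝ` is decreasing, `a, b` belong to the time scale `T`, and `f`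
restricted to `[a,b] ∩ T` is rd-continuous, then the Riemann integral of `f` over `[a,b]`
is dominated by the delta integral of `f` over `[a,b] ∩ T`. -/
theorem riemann_le_delta_of_decreasing
    (T : Set ℝ) (hTne : T.Nonempty) (hTcl : IsClosed T)
    (a b : ℝ) (ha : a ∈ T) (hb : b ∈ T) (hab : a ≤ b)
    (f : ℝ → ℝ) (hmono : AntitoneOn f (Set.Icc a b))
    (hrd : RdContinuousOn T f (Set.Icc a b)) :
    (∫ t in a..b, f t) ≤ deltaInt T a b f := by
  set g : ℝ → ℝ := fun t => sSup (T ∩ Set.Iic t) with hg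
  have hbdd : ∀ t : ℝ, BddAbove (T ∩ Set.Iic t) := fun t =>
    bddAbove_Iic.mono Set.inter_subset_right
  have hne : ∀ t ∈ Set.Icc a b, (T ∩ Set.Iic t).Nonempty := fun t ht =>
    ⟨a, ha, ht.1⟩
  have hgle : ∀ t ∈ Set.Icc a b, g t ≤ t := fun t ht =>
    csSup_le (hne t ht) fun x hx => hx.2
  have hga : ∀ t ∈ Set.Icc a b, a ≤ g t := fun t ht =>
    le_csSup (hbdd t) ⟨ha, ht.1⟩
  have hgmem : ∀ t ∈ Set.Icc a b, g t ∈ Set.Icc a b := fun t ht =>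
    ⟨hga t ht, le_trans (hgle t ht) ht.2⟩
  have hgmono : ∀ s ∈ Set.Icc a b, ∀ t ∈ Set.Icc a b, s ≤ t → g s ≤ g t := by
    intro s hs t ht hst
    exact csSup_le_csSup (hbdd t) (hne s hs)
      (Set.inter_subset_inter_right _ (Set.Iic_subset_Iic.mpr hst))
  have haux : AntitoneOn (fun t => f (g t)) (Set.Icc a b) := by
    intro s hs t ht hst
    exact hmono (hgmem s hs) (hgmem t ht) (hgmono s hs t ht hst)
  have h1 : IntervalIntegrable f volume a b := by
    apply AntitoneOn.intervalIntegrable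
    rwa [Set.uIcc_of_le hab]
  have h2 : IntervalIntegrable (fun t => f (g t)) volume a b := by
    apply AntitoneOn.intervalIntegrable
    rwa [Set.uIcc_of_le hab]
  exact intervalIntegral.integral_mono_on hab h1 h2 fun t ht =>
    hmono (hgmem t ht) ht (hgle t ht)
end

section
/- For any time scale 𝕋, any nonnegative constant c, and any a ≤ b in 𝕋, the n-fold iterated delta integral ∫_a^b ∫_a^{t₁} ⋯ ∫_a^{t_{n−1}} c Δt_n ⋯ Δt₁ is at most c·(b−a)^n / n!. -/
open MeasureTheory

/-- The `n`-fold iterated delta integral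
`t ↦ ∫_a^t ∫_a^{t₁} ⋯ ∫_a^{t_{n-1}} c Δt_n ⋯ Δt₁`. -/
noncomputable def iterDeltaInt (T : Set ℝ) (a c : ℝ) : ℕ → ℝ → ℝ
  | 0 => fun _ => c
  | n + 1 => fun t => deltaInt T a t (iterDeltaInt T a c n)

/-- For a time scale `T`, a nonnegative constant `c` and `a ≤ b` in `T`, the `n`-fold
iterated delta integral of `c` is at most `c (b - a)^n / n!`. -/
theorem iter_delta_integral_le (T : Set ℝ) (hTne : T.Nonempty) (hTcl : IsClosed T)
    (a b c : ℝ) (ha : a ∈ T) (hb : b ∈ T) (hab : a ≤ b) (hc : 0 ≤ c) (n : ℕ) :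
    iterDeltaInt T a c n b ≤ c * (b - a) ^ n / (Nat.factorial n) := by
  set σ : ℝ → ℝ := fun s => sSup (T ∩ Set.Iic s) with hσdef
  have hbdd : ∀ s : ℝ, BddAbove (T ∩ Set.Iic s) := fun s =>
    bddAbove_Iic.mono Set.inter_subset_right
  have hne : ∀ s, a ≤ s → (T ∩ Set.Iic s).Nonempty := fun s hs => ⟨a, ha, hs⟩
  have hσmem : ∀ s, a ≤ s → σ s ∈ T ∩ Set.Iic s := fun s hs =>
    (hTcl.inter isClosed_Iic).csSup_mem (hne s hs) (hbdd s)
  have hσa : ∀ s, a ≤ s → a ≤ σ s := fun s hs => le_csSup (hbdd s) ⟨ha, hs⟩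
  have hσle : ∀ s, a ≤ s → σ s ≤ s := fun s hs => (hσmem s hs).2
  have hσmono : MonotoneOn σ (Set.Ici a) := fun x hx y _ hxy =>
    csSup_le_csSup (hbdd y) (hne x hx)
      (Set.inter_subset_inter_right _ (Set.Iic_subset_Iic.2 hxy))
  have key : ∀ n : ℕ, MonotoneOn (iterDeltaInt T a c n) (Set.Ici a) ∧
      ∀ t, a ≤ t → 0 ≤ iterDeltaInt T a c n t ∧
        iterDeltaInt T a c n t ≤ c * (t - a) ^ n / (Nat.factorial n) := by
    intro n
    induction n with
    | zero =>
      refine ⟨fun x _ y _ _ => le_rfl, fun t ht => ⟨hc, ?_⟩⟩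
      simp [iterDeltaInt]
    | succ n ih =>
      obtain ⟨hmono, hbd⟩ := ih
      set g : ℝ → ℝ := fun s => iterDeltaInt T a c n (σ s) with hgdef
      have hgmono : MonotoneOn g (Set.Ici a) := fun x hx y hy hxy =>
        hmono (hσa x hx) (hσa y hy) (hσmono hx hy hxy)
      have hgint : ∀ u v, a ≤ u → a ≤ v → IntervalIntegrable g volume u v := by
        intro u v hu hv
        exact (hgmono.mono (fun x hx => le_trans (le_inf hu hv) hx.1)).intervalIntegrable
      have hg0 : ∀ s, a ≤ s → 0 ≤ g s := fun s hs => (hbd _ (hσa s hs)).1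
      have hgub : ∀ s, a ≤ s → g s ≤ c * (s - a) ^ n / (Nat.factorial n) := by
        intro s hs
        refine le_trans (hbd (σ s) (hσa s hs)).2 ?_
        gcongr
        · exact sub_nonneg.2 (hσa s hs)
        · exact hσle s hs
      have heq : ∀ t, iterDeltaInt T a c (n + 1) t = ∫ s in a..t, g s := by
        intro t; rfl
      constructor
      · intro x hx y hy hxy
        rw [heq, heq, ← intervalIntegral.integral_add_adjacent_intervals
          (hgint a x le_rfl hx) (hgint x y hx (le_trans hx hxy))]
        have : 0 ≤ ∫ s in x..y, g s :=
          intervalIntegral.integral_nonneg hxy (fun u hu => hg0 u (le_trans hx hu.1))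
        linarith
      · intro t ht
        rw [heq]
        constructor
        · exact intervalIntegral.integral_nonneg ht (fun u hu => hg0 u hu.1)
        · have hcont : IntervalIntegrable
              (fun s => c * (s - a) ^ n / (Nat.factorial n)) volume a t := by
            apply Continuous.intervalIntegrable
            fun_prop
          have hle : (∫ s in a..t, g s) ≤
              ∫ s in a..t, c * (s - a) ^ n / (Nat.factorial n) :=
            intervalIntegral.integral_mono_on ht (hgint a t le_rfl ht) hcont
              (fun s hs => hgub s hs.1)
          refine hle.trans (le_of_eq ?_)
          have h1 : ∀ s : ℝ, c * (s - a) ^ n / (Nat.factorial n)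
              = (c / (Nat.factorial n)) * (s - a) ^ n := fun s => by ring
          simp only [h1]
          rw [intervalIntegral.integral_const_mul,
            intervalIntegral.integral_comp_sub_right (fun x => x ^ n) a,
            integral_pow]
          have hfact : ((n + 1).factorial : ℝ) = (n + 1) * (Nat.factorial n) := by
            push_cast [Nat.factorial_succ]; ring
          have hn : (Nat.factorial n : ℝ) ≠ 0 := Nat.cast_ne_zero.2 (Nat.factorial_ne_zero n)
          have hn1 : (n : ℝ) + 1 ≠ 0 := by positivity
          rw [hfact, sub_self, zero_pow (Nat.succ_ne_zero n), sub_zero,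
            div_mul_div_comm, mul_comm (Nat.factorial n : ℝ)]
  exact ((key n).2 b hab).2
end

section
/- For any time scale 𝕋, any nonpositive constant c, and any a ≤ b in 𝕋, the n-fold iterated delta integral ∫_a^b ∫_a^{t₁} ⋯ ∫_a^{t_{n−1}} c Δt_n ⋯ Δt₁ is at least c·(b−a)^n / n!. -/
open MeasureTheory

lemma rho_ge (T : Set ℝ) (a : ℝ) (ha : a ∈ T) {s : ℝ} (has : a ≤ s) :
    a ≤ sSup (T ∩ Set.Iic s) :=
  le_csSup ⟨s, fun x hx => hx.2⟩ ⟨ha, has⟩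

lemma rho_le (T : Set ℝ) (a : ℝ) (ha : a ∈ T) {s : ℝ} (has : a ≤ s) :
    sSup (T ∩ Set.Iic s) ≤ s :=
  csSup_le ⟨a, ha, has⟩ fun x hx => hx.2

lemma rho_mono (T : Set ℝ) (a : ℝ) (ha : a ∈ T) {s1 s2 : ℝ} (h1 : a ≤ s1) (h : s1 ≤ s2) :
    sSup (T ∩ Set.Iic s1) ≤ sSup (T ∩ Set.Iic s2) :=
  csSup_le_csSup ⟨s2, fun x hx => hx.2⟩ ⟨a, ha, h1⟩
    (Set.inter_subset_inter_right _ (Set.Iic_subset_Iic.mpr h))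

lemma integral_pow_sub (a t : ℝ) (n : ℕ) :
    ∫ s in a..t, (s - a) ^ n = (t - a) ^ (n + 1) / (n + 1) := by
  rw [intervalIntegral.integral_comp_sub_right (fun x => x ^ n) a]
  simp [integral_pow]


lemma key (T : Set ℝ) (a c : ℝ) (ha : a ∈ T) (hc : c ≤ 0) (n : ℕ) :
    AntitoneOn (iterDeltaInt T a c n) (Set.Ici a) ∧
    (∀ t, a ≤ t → iterDeltaInt T a c n t ≤ 0) ∧
    (∀ t, a ≤ t → c * (t - a) ^ n / (Nat.factorial n) ≤ iterDeltaInt T a c n t) := by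
  induction n with
  | zero =>
    refine ⟨antitoneOn_const, fun t _ => hc, fun t _ => by simp [iterDeltaInt]⟩
  | succ n ih =>
    obtain ⟨hA, hB, hC⟩ := ih
    set g : ℝ → ℝ := fun s => iterDeltaInt T a c n (sSup (T ∩ Set.Iic s)) with hg
    have hgA : AntitoneOn g (Set.Ici a) := by
      intro s1 hs1 s2 hs2 h12
      exact hA (rho_ge T a ha hs1) (rho_ge T a ha hs2) (rho_mono T a ha hs1 h12)
    have hgB : ∀ s, a ≤ s → g s ≤ 0 := fun s hs => hB _ (rho_ge T a ha hs)
    have hgint : ∀ t1 t2, a ≤ t1 → t1 ≤ t2 →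
        IntervalIntegrable g volume t1 t2 := by
      intro t1 t2 h1 h2
      have hsub : Set.uIcc t1 t2 ⊆ Set.Ici a := by
        rw [Set.uIcc_of_le h2]
        exact fun x hx => le_trans h1 hx.1
      exact (hgA.mono hsub).intervalIntegrable
    have hnonpos : ∀ t1 t2, a ≤ t1 → t1 ≤ t2 → (∫ s in t1..t2, g s) ≤ 0 := by
      intro t1 t2 h1 h2
      have := intervalIntegral.integral_mono_on h2 (hgint t1 t2 h1 h2)
        intervalIntegrable_const (fun u hu => hgB u (le_trans h1 hu.1))
      simpa using this
    have heq : ∀ t, iterDeltaInt T a c (n + 1) t = ∫ s in a..t, g s := fun t => rfl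
    have hBsucc : ∀ t, a ≤ t → iterDeltaInt T a c (n + 1) t ≤ 0 := by
      intro t ht
      rw [heq]
      exact hnonpos a t le_rfl ht
    refine ⟨?_, hBsucc, ?_⟩
    · intro t1 ht1 t2 ht2 h12
      rw [heq, heq, ← intervalIntegral.integral_add_adjacent_intervals
        (hgint a t1 le_rfl ht1) (hgint t1 t2 ht1 h12)]
      linarith [hnonpos t1 t2 ht1 h12]
    · intro t ht
      rw [heq]
      have hcomp : ∀ s ∈ Set.Icc a t,
          c * (s - a) ^ n / (Nat.factorial n) ≤ g s := by
        intro s hs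
        refine le_trans ?_ (hC _ (rho_ge T a ha hs.1))
        have h1 : (sSup (T ∩ Set.Iic s) - a) ^ n ≤ (s - a) ^ n := by
          apply pow_le_pow_left₀ (by linarith [rho_ge T a ha hs.1])
          linarith [rho_le T a ha hs.1]
        have h2 : c * (s - a) ^ n ≤ c * (sSup (T ∩ Set.Iic s) - a) ^ n :=
          mul_le_mul_of_nonpos_left h1 hc
        exact div_le_div_of_nonneg_right h2 (by positivity) |>.trans_eq rfl
      have hint1 : IntervalIntegrable (fun s => c * (s - a) ^ n / (Nat.factorial n))
          volume a t := by
        apply Continuous.intervalIntegrable; continuity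
      have := intervalIntegral.integral_mono_on ht hint1 (hgint a t le_rfl ht) hcomp
      refine le_trans ?_ this
      have : (fun s => c * (s - a) ^ n / (Nat.factorial n))
          = fun s => (c / (Nat.factorial n)) * (s - a) ^ n := by
        funext s; ring
      rw [this, intervalIntegral.integral_const_mul, integral_pow_sub]
      rw [Nat.factorial_succ]
      have h0 : (Nat.factorial n : ℝ) ≠ 0 := by positivity
      have h1 : ((n : ℝ) + 1) ≠ 0 := by positivity
      push_cast
      field_simp
      ring_nf
      exact le_rfl

/-- For a time scale `T`, a nonpositive constant `c` and `a ≤ b` in `T`, the `n`-fold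
iterated delta integral of `c` is at least `c (b - a)^n / n!`. -/
theorem iter_delta_integral_ge (T : Set ℝ) (hTne : T.Nonempty) (hTcl : IsClosed T)
    (a b c : ℝ) (ha : a ∈ T) (hb : b ∈ T) (hab : a ≤ b) (hc : c ≤ 0) (n : ℕ) :
    c * (b - a) ^ n / (Nat.factorial n) ≤ iterDeltaInt T a c n b := by
  exact (key T a c ha hc n).2.2 b hab
end

section
/- If D is a compact subset of ℝ which is a time scale, fₙ : D → ℝ are rd-continuous for each n ∈ ℕ, and {fₙ} converges uniformly to f on D, then f is rd-continuous and for a, b ∈ D, the delta integral of f over [a,b] equals the limit of the delta integrals of fₙ over [a,b]. -/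
/-!
Uniform limits preserve one-sided limits along any filter (the limit map is Cauchy), so
rd-continuity passes to the limit. The delta integral is the Lebesgue integral of `φ ∘ g` with
`g t = sSup (D ∩ Iic t)`; `g` maps right neighbourhoods of `t` into right neighbourhoods of
`g t` within `D`, where an rd-continuous `φ` is continuous, so `φ ∘ g` is right-continuous and
hence measurable. An rd-continuous function has one-sided limits everywhere, so it is bounded on
the compact `D`, and dominated convergence applies to `Fₙ ∘ g → f ∘ g`, which is uniform.
-/

open MeasureTheory Filter

open Set Topology
open scoped Interval

theorem TendstoUniformlyOnFilter.cauchy_map {ι α β : Type*} [UniformSpace β]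
    {F : ι → α → β} {f : α → β} {p : Filter ι} {l : Filter α} [p.NeBot] [l.NeBot]
    (h : TendstoUniformlyOnFilter F f p l) (hF : ∀ᶠ i in p, Cauchy (map (F i) l)) :
    Cauchy (map f l) := by
  replace hF := hF.mono fun i hi => cauchy_map_iff'.1 hi
  refine cauchy_map_iff'.2 fun V hV => mem_map.2 ?_
  obtain ⟨t, ht, htsymm, htV⟩ := comp_comp_symm_mem_uniformity_sets hV
  obtain ⟨i, hFi, hfFi⟩ := (hF.and (h t ht).curry).exists
  filter_upwards [hFi ht, hfFi.prod_mk hfFi] with q hq hfq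
  exact htV ⟨F i q.2, ⟨F i q.1, hfq.1, hq⟩, htsymm.symm _ _ hfq.2⟩

theorem tendsto_ceil_mul_div_nhdsGE (t : ℝ) :
    Tendsto (fun n : ℕ => ⌈(n + 1 : ℝ) * t⌉ / (n + 1 : ℝ)) atTop (𝓝[≥] t) := by
  have hle : ∀ n : ℕ, t ≤ ⌈(n + 1 : ℝ) * t⌉ / (n + 1 : ℝ) := fun n => by
    rw [le_div_iff₀ (by positivity), mul_comm]
    exact Int.le_ceil _
  refine tendsto_nhdsWithin_iff.2 ⟨?_, Eventually.of_forall hle⟩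
  have hupper : Tendsto (fun n : ℕ => t + 1 / ((n : ℝ) + 1)) atTop (𝓝 t) := by
    simpa using tendsto_const_nhds.add (tendsto_one_div_add_atTop_nhds_zero_nat (𝕜 := ℝ))
  refine tendsto_of_tendsto_of_tendsto_of_le_of_le tendsto_const_nhds hupper hle fun n => ?_
  have hn : (t + 1 / ((n : ℝ) + 1)) * (n + 1) = (n + 1) * t + 1 := by field_simp
  rw [div_le_iff₀ (by positivity), hn]
  exact (Int.ceil_lt_add_one _).le

theorem measurable_of_forall_continuousWithinAt_Ici {β : Type*} [TopologicalSpace β]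
    [TopologicalSpace.PseudoMetrizableSpace β] [MeasurableSpace β] [BorelSpace β] {f : ℝ → β}
    (hf : ∀ t, ContinuousWithinAt f (Ici t) t) : Measurable f := by
  refine measurable_of_tendsto_metrizable
    (f := fun n t => f (⌈(n + 1 : ℝ) * t⌉ / (n + 1 : ℝ))) (fun n => ?_)
    (tendsto_pi_nhds.2 fun t => (hf t).tendsto.comp (tendsto_ceil_mul_div_nhdsGE t))
  exact (measurable_of_countable (fun k : ℤ => f (k / (n + 1 : ℝ)))).comp
    (Int.measurable_ceil.comp (measurable_const.mul measurable_id))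

theorem Filter.Tendsto.exists_mem_isBounded_image {α β : Type*} [PseudoMetricSpace β]
    {f : α → β} {l : Filter α} {L : β} (h : Tendsto f l (𝓝 L)) :
    ∃ S ∈ l, Bornology.IsBounded (f '' S) :=
  ⟨f ⁻¹' Metric.ball L 1, h (Metric.ball_mem_nhds _ one_pos),
    Metric.isBounded_ball.subset (image_preimage_subset _ _)⟩

theorem TendstoUniformlyOn.tendsto_intervalIntegral {ι E : Type*} [NormedAddCommGroup E]
    [NormedSpace ℝ E] {l : Filter ι} [l.IsCountablyGenerated] {F : ι → ℝ → E} {f : ℝ → E}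
    {a b : ℝ} {μ : Measure ℝ} [IsLocallyFiniteMeasure μ]
    (hF : ∀ᶠ i in l, IntervalIntegrable (F i) μ a b) (hf : IntervalIntegrable f μ a b)
    (h : TendstoUniformlyOn F f l (Ι a b)) :
    Tendsto (fun i => ∫ x in a..b, F i x ∂μ) l (𝓝 (∫ x in a..b, f x ∂μ)) := by
  refine intervalIntegral.tendsto_integral_filter_of_dominated_convergence (fun x => ‖f x‖ + 1)
    (hF.mono fun i hi => hi.def'.aestronglyMeasurable) ?_ (hf.norm.add intervalIntegrable_const)
    (ae_of_all _ fun x hx => h.tendsto_at hx)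
  filter_upwards [Metric.tendstoUniformlyOn_iff.1 h 1 one_pos] with i hi
  exact ae_of_all _ fun x hx =>
    norm_le_norm_add_const_of_dist_le (dist_comm (f x) _ ▸ hi x hx).le

namespace RdContinuousOn

variable {T s : Set ℝ} {φ : ℝ → ℝ} {c : ℝ}

theorem tendsto_nhdsWithin_Ici (hφ : RdContinuousOn T φ s) (hc : c ∈ s ∩ T) :
    Tendsto φ (𝓝[T ∩ Ici c] c) (𝓝 (φ c)) := by
  by_cases hrd : c ∈ closure (T ∩ Ioi c)
  · exact (hφ.1 c hc hrd).mono_left (nhdsWithin_mono _ inter_subset_left)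
  · have hsub : T ∩ Ici c ⊆ insert c (T ∩ Ioi c) := fun x hx =>
      hx.2.eq_or_lt.imp Eq.symm fun hcx => ⟨hx.1, hcx⟩
    have hpure : 𝓝[T ∩ Ici c] c ≤ pure c := by
      refine (nhdsWithin_mono _ hsub).trans ?_
      rw [nhdsWithin_insert, notMem_closure_iff_nhdsWithin_eq_bot.1 hrd, sup_bot_eq]
    exact (tendsto_pure_nhds φ c).mono_left hpure

theorem exists_tendsto_nhdsWithin_Iio (hφ : RdContinuousOn T φ s) (hc : c ∈ s ∩ T) :
    ∃ L, Tendsto φ (𝓝[T ∩ Iio c] c) (𝓝 L) := by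
  by_cases hld : c ∈ closure (T ∩ Iio c)
  · exact hφ.2 c hc hld
  · exact ⟨0, by rw [notMem_closure_iff_nhdsWithin_eq_bot.1 hld]; exact tendsto_bot⟩

theorem isBounded_image (hT : IsCompact T) (hφ : RdContinuousOn T φ T) :
    Bornology.IsBounded (φ '' T) := by
  refine hT.induction_on (p := fun S => Bornology.IsBounded (φ '' S)) (by simp)
    (fun S S' hSS' hS' => hS'.subset (image_mono hSS'))
    (fun S S' hS hS' => by rw [image_union]; exact hS.union hS') fun x hx => ?_
  obtain ⟨L, hL⟩ := hφ.exists_tendsto_nhdsWithin_Iio ⟨hx, hx⟩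
  obtain ⟨S₁, hS₁, hb₁⟩ := hL.exists_mem_isBounded_image
  obtain ⟨S₂, hS₂, hb₂⟩ := (hφ.tendsto_nhdsWithin_Ici ⟨hx, hx⟩).exists_mem_isBounded_image
  have hsplit : 𝓝[T] x = 𝓝[T ∩ Iio x] x ⊔ 𝓝[T ∩ Ici x] x := by
    rw [← nhdsWithin_union, ← inter_union_distrib_left, Iio_union_Ici, inter_univ]
  refine ⟨S₁ ∪ S₂, hsplit ▸ union_mem_sup hS₁ hS₂, ?_⟩
  rw [image_union]
  exact hb₁.union hb₂

end RdContinuousOn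

theorem TendstoUniformlyOn.rdContinuousOn {ι : Type*} {p : Filter ι} [p.NeBot]
    {F : ι → ℝ → ℝ} {f : ℝ → ℝ} {T s : Set ℝ} (hF : ∀ᶠ i in p, RdContinuousOn T (F i) s)
    (h : TendstoUniformlyOn F f p T) : RdContinuousOn T f s := by
  have hT := h.tendstoUniformlyOnFilter
  refine ⟨fun t ht hrd => ?_, fun t ht hld => ?_⟩
  · exact (hT.mono_right inf_le_right).tendsto_of_eventually_tendsto
      (hF.mono fun i hi => hi.1 t ht hrd) (h.tendsto_at ht.2)
  · have := mem_closure_iff_nhdsWithin_neBot.1 hld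
    refine cauchy_map_iff_exists_tendsto.1 <|
      (hT.mono_right ((nhdsWithin_mono _ inter_subset_left).trans inf_le_right)).cauchy_map
        (hF.mono fun i hi => ?_)
    obtain ⟨L, hL⟩ := hi.2 t ht hld
    exact hL.cauchy_map

section SupInterIic

variable {T : Set ℝ}

theorem IsClosed.sSup_inter_Iic_mem (hT : IsClosed T) {t : ℝ} (ht : (T ∩ Iic t).Nonempty) :
    sSup (T ∩ Iic t) ∈ T ∩ Iic t :=
  (hT.inter isClosed_Iic).csSup_mem ht (bddAbove_Iic.mono inter_subset_right)

theorem IsClosed.sSup_inter_Iic_mem_of_mem_uIcc (hT : IsClosed T) {a b t : ℝ} (ha : a ∈ T)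
    (hb : b ∈ T) (ht : t ∈ [[a, b]]) : sSup (T ∩ Iic t) ∈ T :=
  (hT.sSup_inter_Iic_mem ⟨min a b, min_rec' (· ∈ T) ha hb, ht.1⟩).1

/-- If `t ∈ T` the supremum is squeezed between `t` and `s`; otherwise it is locally constant
to the right of `t`, as `T` is closed. -/
theorem IsClosed.tendsto_sSup_inter_Iic (hT : IsClosed T) {t : ℝ}
    (ht : (T ∩ Iic t).Nonempty) :
    Tendsto (fun s => sSup (T ∩ Iic s)) (𝓝[≥] t)
      (𝓝[T ∩ Ici (sSup (T ∩ Iic t))] (sSup (T ∩ Iic t))) := by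
  set c := sSup (T ∩ Iic t)
  have hmem : ∀ s ∈ Ici t, sSup (T ∩ Iic s) ∈ T ∩ Iic s := fun s hs =>
    hT.sSup_inter_Iic_mem (ht.mono (inter_subset_inter_right _ (Iic_subset_Iic.2 hs)))
  have hmono : ∀ s ∈ Ici t, c ≤ sSup (T ∩ Iic s) := fun s hs =>
    csSup_le_csSup (bddAbove_Iic.mono inter_subset_right) ht
      (inter_subset_inter_right _ (Iic_subset_Iic.2 hs))
  refine tendsto_nhdsWithin_iff.2
    ⟨?_, eventually_nhdsWithin_of_forall fun s hs => ⟨(hmem s hs).1, hmono s hs⟩⟩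
  by_cases htT : t ∈ T
  · have hc : c = t := IsGreatest.csSup_eq ⟨⟨htT, mem_Iic.2 le_rfl⟩, fun x hx => hx.2⟩
    refine tendsto_of_tendsto_of_tendsto_of_le_of_le' tendsto_const_nhds
      (hc ▸ tendsto_nhdsWithin_of_tendsto_nhds tendsto_id)
      (eventually_nhdsWithin_of_forall hmono)
      (eventually_nhdsWithin_of_forall fun s hs => (hmem s hs).2)
  · obtain ⟨u, htu, hu⟩ :=
      exists_Ico_subset_of_mem_nhds (hT.isOpen_compl.mem_nhds htT) ⟨t + 1, by linarith⟩
    have hconst : ∀ s ∈ Ico t u, T ∩ Iic s = T ∩ Iic t := fun s hs =>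
      Subset.antisymm
        (fun x hx => ⟨hx.1, not_lt.1 fun htx => hu ⟨htx.le, hx.2.trans_lt hs.2⟩ hx.1⟩)
        (inter_subset_inter_right _ (Iic_subset_Iic.2 hs.1))
    refine tendsto_const_nhds.congr' (eventually_of_mem (Ico_mem_nhdsGE htu) fun s hs => ?_)
    simp only [c, hconst s hs]

theorem RdContinuousOn.continuousWithinAt_comp_sSup_inter_Iic (hT : IsClosed T) {φ : ℝ → ℝ}
    (hφ : RdContinuousOn T φ T) {t : ℝ} (ht : (T ∩ Iic t).Nonempty) :
    ContinuousWithinAt (fun s => φ (sSup (T ∩ Iic s))) (Ici t) t :=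
  have hc := (hT.sSup_inter_Iic_mem ht).1
  (hφ.tendsto_nhdsWithin_Ici ⟨hc, hc⟩).comp (hT.tendsto_sSup_inter_Iic ht)

theorem RdContinuousOn.measurable_comp_sSup_inter_Iic_max (hT : IsClosed T) {φ : ℝ → ℝ}
    (hφ : RdContinuousOn T φ T) {l : ℝ} (hl : l ∈ T) :
    Measurable fun t => φ (sSup (T ∩ Iic (max l t))) := by
  refine measurable_of_forall_continuousWithinAt_Ici fun t => ?_
  have hmax : Tendsto (max l) (𝓝[≥] t) (𝓝[≥] (max l t)) :=
    tendsto_nhdsWithin_iff.2 ⟨(continuous_const.max continuous_id).continuousWithinAt.tendsto,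
      eventually_nhdsWithin_of_forall fun s hs => max_le_max_left l hs⟩
  exact (hφ.continuousWithinAt_comp_sSup_inter_Iic hT ⟨l, hl, le_max_left l t⟩).tendsto.comp hmax

/-- Clamping at `min a b` makes the integrand right-continuous on all of `ℝ` without changing it
on `[[a, b]]`. -/
theorem RdContinuousOn.intervalIntegrable_comp_sSup_inter_Iic (hT : IsCompact T) {φ : ℝ → ℝ}
    (hφ : RdContinuousOn T φ T) {a b : ℝ} (ha : a ∈ T) (hb : b ∈ T) :
    IntervalIntegrable (fun t => φ (sSup (T ∩ Iic t))) volume a b := by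
  have hl : min a b ∈ T := min_rec' (· ∈ T) ha hb
  obtain ⟨C, hC⟩ := isBounded_iff_forall_norm_le.1 (hφ.isBounded_image hT)
  have hclamped :
      IntervalIntegrable (fun t => φ (sSup (T ∩ Iic (max (min a b) t)))) volume a b :=
    intervalIntegrable_const.mono_fun'
      (hφ.measurable_comp_sSup_inter_Iic_max hT.isClosed hl).aestronglyMeasurable
      (ae_of_all _ fun t => hC _ (mem_image_of_mem φ
        (hT.isClosed.sSup_inter_Iic_mem ⟨_, hl, le_max_left _ t⟩).1))
  refine hclamped.congr_ae (ae_restrict_of_forall_mem measurableSet_uIoc fun t ht => ?_)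
  simp only [max_eq_right (uIoc_subset_uIcc ht).1]

end SupInterIic

theorem rdContinuous_limit_and_delta_integral_limit_general
    (D : Set ℝ) (hDcp : IsCompact D)
    (F : ℕ → ℝ → ℝ) (f : ℝ → ℝ)
    (hF : ∀ n, RdContinuousOn D (F n) D)
    (hconv : TendstoUniformlyOn F f atTop D)
    (a b : ℝ) (ha : a ∈ D) (hb : b ∈ D) :
    RdContinuousOn D f D ∧
      Tendsto (fun n => deltaInt D a b (F n)) atTop (nhds (deltaInt D a b f)) := by
  have hf : RdContinuousOn D f D := hconv.rdContinuousOn (Eventually.of_forall hF)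
  refine ⟨hf, TendstoUniformlyOn.tendsto_intervalIntegral
    (Eventually.of_forall fun n => (hF n).intervalIntegrable_comp_sSup_inter_Iic hDcp ha hb)
    (hf.intervalIntegrable_comp_sSup_inter_Iic hDcp ha hb) ?_⟩
  refine (hconv.comp fun t => sSup (D ∩ Iic t)).mono fun t ht => ?_
  exact hDcp.isClosed.sSup_inter_Iic_mem_of_mem_uIcc ha hb (uIoc_subset_uIcc ht)

/-- If `D` is a compact time scale, each `F n` is rd-continuous on `D` and `F n → f`
uniformly on `D`, then `f` is rd-continuous on `D` and the delta integrals of `F n`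
over `[a,b]` converge to the delta integral of `f` over `[a,b]`, for `a, b ∈ D`. -/
theorem rdContinuous_limit_and_delta_integral_limit
    (D : Set ℝ) (hDne : D.Nonempty) (hDcp : IsCompact D)
    (F : ℕ → ℝ → ℝ) (f : ℝ → ℝ)
    (hF : ∀ n, RdContinuousOn D (F n) D)
    (hconv : TendstoUniformlyOn F f atTop D)
    (a b : ℝ) (ha : a ∈ D) (hb : b ∈ D) :
    RdContinuousOn D f D ∧
      Tendsto (fun n => deltaInt D a b (F n)) atTop (nhds (deltaInt D a b f)) :=
  rdContinuous_limit_and_delta_integral_limit_general D hDcp F f hF hconv a b ha hb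
end

section
/- For the planar linear system x^Δ = y, y^Δ = −φ(t)φ^σ(t) x + (φ^Δ(t)/φ(t)) y on a time scale, the matrix X(t) with columns (cos_φ(t,t₀), −φ(t) sin_φ(t,t₀))ᵀ and ((1/φ(t₀)) sin_φ(t,t₀), (φ(t)/φ(t₀)) cos_φ(t,t₀))ᵀ is a fundamental matrix solution. -/
def HasDeltaDerivAt (T : Set ℝ) (σ : ℝ → ℝ) (f : ℝ → ℝ) (f' t : ℝ) : Prop :=
  ∀ ε > (0 : ℝ), ∃ δ > (0 : ℝ), ∀ s ∈ T, |s - t| < δ →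
    |f (σ t) - f s - f' * (σ t - s)| ≤ ε * |σ t - s|

theorem HasDeltaDerivAt.congr_deriv {T : Set ℝ} {σ f} {a b t : ℝ}
    (h : HasDeltaDerivAt T σ f a t) (hab : a = b) : HasDeltaDerivAt T σ f b t := hab ▸ h

theorem HasDeltaDerivAt.jump {T : Set ℝ} {σ f} {f' t : ℝ} (ht : t ∈ T)
    (hf : HasDeltaDerivAt T σ f f' t) : f (σ t) = f t + f' * (σ t - t) := by
  by_contra h
  have hrpos : 0 < |f (σ t) - f t - f' * (σ t - t)| := by
    rw [abs_pos]; intro h0; apply h; linarith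
  have hm0 : (0:ℝ) ≤ |σ t - t| := abs_nonneg _
  obtain ⟨δ, hδ, H⟩ := hf (|f (σ t) - f t - f' * (σ t - t)| / (2 * (|σ t - t| + 1)))
    (by positivity)
  have hle := H t ht (by simpa using hδ)
  rw [div_mul_eq_mul_div, le_div_iff₀ (by positivity)] at hle
  nlinarith [mul_nonneg hrpos.le hm0]

theorem HasDeltaDerivAt.neg {T : Set ℝ} {σ f} {f' t : ℝ}
    (hf : HasDeltaDerivAt T σ f f' t) :
    HasDeltaDerivAt T σ (fun u => -f u) (-f') t := by
  intro ε hε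
  obtain ⟨δ, hδ, H⟩ := hf ε hε
  refine ⟨δ, hδ, fun s hs hst => ?_⟩
  have h1 := H s hs hst
  show |-f (σ t) - -f s - -f' * (σ t - s)| ≤ ε * |σ t - s|
  have h2 : -f (σ t) - -f s - -f' * (σ t - s)
      = -(f (σ t) - f s - f' * (σ t - s)) := by ring
  rw [h2, abs_neg]; exact h1

theorem HasDeltaDerivAt.div_const {T : Set ℝ} {σ f} {f' t : ℝ}
    (c : ℝ) (hf : HasDeltaDerivAt T σ f f' t) :
    HasDeltaDerivAt T σ (fun u => f u / c) (f' / c) t := by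
  intro ε hε
  obtain ⟨δ, hδ, H⟩ := hf (ε / (|c|⁻¹ + 1)) (by positivity)
  refine ⟨δ, hδ, fun s hs hst => ?_⟩
  have h1 := H s hs hst
  have h2 : f (σ t) / c - f s / c - f' / c * (σ t - s)
      = (f (σ t) - f s - f' * (σ t - s)) / c := by ring
  rw [h2, abs_div]
  have hci : 0 ≤ |c|⁻¹ := by positivity
  rcases eq_or_ne c 0 with hc | hc
  · simp [hc]; positivity
  · have hcpos : 0 < |c| := abs_pos.mpr hc
    rw [div_eq_mul_inv]
    calc |f (σ t) - f s - f' * (σ t - s)| * |c|⁻¹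
        ≤ (ε / (|c|⁻¹ + 1) * |σ t - s|) * |c|⁻¹ :=
          mul_le_mul_of_nonneg_right h1 hci
      _ ≤ ε * |σ t - s| := by
          rw [div_mul_eq_mul_div, div_mul_eq_mul_div, div_le_iff₀ (by positivity)]
          nlinarith [abs_nonneg (σ t - s), hε.le]

private lemma arith_core (ε ε₁ δ x μ M A F' G' : ℝ)
    (hx0 : 0 ≤ x) (hxμ1 : x ≤ μ + 1) (hμ0 : 0 ≤ μ)
    (hM1 : 1 ≤ M) (hA : A ≤ M) (hA0 : 0 ≤ A)
    (hF' : F' + 1 ≤ M) (hF'0 : 0 ≤ F') (hG' : G' ≤ M) (hG'0 : 0 ≤ G')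
    (hε₁pos : 0 < ε₁) (hε₁1 : ε₁ ≤ 1) (hδ0 : 0 < δ)
    (h1 : ε₁ * (3 * M * (μ + 2)) ≤ ε) (h2 : δ * (3 * M * M) ≤ ε) :
    A * (ε₁ * x) + (G' * δ + ε₁ * x) * ((F' + ε₁) * x) ≤ ε * x := by
  have hM0 : (0:ℝ) < M := by linarith
  have hεpos : 0 < ε := by
    nlinarith [mul_pos (mul_pos hε₁pos hM0) (show (0:ℝ) < μ + 2 by linarith)]
  have t1 : A * (ε₁ * x) ≤ M * (ε₁ * x) := by
    have := mul_nonneg hε₁pos.le hx0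
    nlinarith [mul_nonneg (mul_nonneg (sub_nonneg.2 hA) hε₁pos.le) hx0]
  have hFε : F' + ε₁ ≤ M := by linarith
  have hFε0 : 0 ≤ F' + ε₁ := by linarith
  have t2 : (G' * δ) * ((F' + ε₁) * x) ≤ (M * δ) * (M * x) := by gcongr
  have t3 : (ε₁ * x) * ((F' + ε₁) * x) ≤ (ε₁ * (μ + 1)) * (M * x) := by gcongr
  have key : M * (ε₁ * x) + (M * δ) * (M * x) + (ε₁ * (μ + 1)) * (M * x)
      = (ε₁ * M * (μ + 2) + M * M * δ) * x := by ring
  have hc1 : ε₁ * M * (μ + 2) ≤ ε / 3 := by linarith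
  have hc2 : M * M * δ ≤ ε / 3 := by linarith
  have hfin : (ε₁ * M * (μ + 2) + M * M * δ) * x ≤ ε * x := by
    apply mul_le_mul_of_nonneg_right _ hx0
    linarith
  have expand : (G' * δ + ε₁ * x) * ((F' + ε₁) * x)
      = (G' * δ) * ((F' + ε₁) * x) + (ε₁ * x) * ((F' + ε₁) * x) := by ring
  linarith

theorem HasDeltaDerivAt.mul {T : Set ℝ} {σ f g} {f' g' t : ℝ} (ht : t ∈ T)
    (hf : HasDeltaDerivAt T σ f f' t) (hg : HasDeltaDerivAt T σ g g' t) :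
    HasDeltaDerivAt T σ (fun u => f u * g u) (f' * g t + f (σ t) * g') t := by
  intro ε hε
  obtain ⟨μ, hμdef, hμ0⟩ : ∃ μ : ℝ, μ = |σ t - t| ∧ 0 ≤ μ :=
    ⟨|σ t - t|, rfl, abs_nonneg _⟩
  obtain ⟨M, hM1, hMA, hMf, hMg⟩ : ∃ M : ℝ, 1 ≤ M ∧ |f (σ t)| + |g t| ≤ M ∧
      |f'| + 1 ≤ M ∧ |g'| ≤ M := by
    refine ⟨|f (σ t)| + |g t| + |f'| + |g'| + 1, ?_, ?_, ?_, ?_⟩ <;>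
      [skip; skip; skip; skip] <;>
      nlinarith [abs_nonneg (f (σ t)), abs_nonneg (g t), abs_nonneg f', abs_nonneg g']
  have hM0 : (0:ℝ) < M := by linarith
  have hD1 : (0:ℝ) < 3 * M * (μ + 2) := by nlinarith
  have hD2 : (0:ℝ) < 3 * M * M := by nlinarith
  obtain ⟨ε₁, hε₁pos, hε₁le1, hε₁bound⟩ :
      ∃ ε₁ : ℝ, 0 < ε₁ ∧ ε₁ ≤ 1 ∧ ε₁ * (3 * M * (μ + 2)) ≤ ε := by
    refine ⟨min 1 (ε / (3 * M * (μ + 2))), lt_min one_pos (by positivity),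
      min_le_left _ _, ?_⟩
    calc min 1 (ε / (3 * M * (μ + 2))) * (3 * M * (μ + 2))
        ≤ (ε / (3 * M * (μ + 2))) * (3 * M * (μ + 2)) :=
          mul_le_mul_of_nonneg_right (min_le_right _ _) hD1.le
      _ = ε := div_mul_cancel₀ _ (ne_of_gt hD1)
  obtain ⟨δf, hδf, Hf⟩ := hf ε₁ hε₁pos
  obtain ⟨δg, hδg, Hg⟩ := hg ε₁ hε₁pos
  obtain ⟨δ, hδpos, hδle1, hδlef, hδleg, hδbound⟩ :
      ∃ δ : ℝ, 0 < δ ∧ δ ≤ 1 ∧ δ ≤ δf ∧ δ ≤ δg ∧ δ * (3 * M * M) ≤ ε := by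
    refine ⟨min (min δf δg) (min 1 (ε / (3 * M * M))),
      lt_min (lt_min hδf hδg) (lt_min one_pos (by positivity)),
      (min_le_right _ _).trans (min_le_left _ _),
      (min_le_left _ _).trans (min_le_left _ _),
      (min_le_left _ _).trans (min_le_right _ _), ?_⟩
    calc min (min δf δg) (min 1 (ε / (3 * M * M))) * (3 * M * M)
        ≤ (ε / (3 * M * M)) * (3 * M * M) := by
          apply mul_le_mul_of_nonneg_right _ hD2.le
          exact (min_le_right _ _).trans (min_le_right _ _)
      _ = ε := div_mul_cancel₀ _ (ne_of_gt hD2)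
  refine ⟨δ, hδpos, fun s hs hst => ?_⟩
  have hEf := Hf s hs (lt_of_lt_of_le hst hδlef)
  have hEg := Hg s hs (lt_of_lt_of_le hst hδleg)
  have hjg := HasDeltaDerivAt.jump ht hg
  have hx0 : (0:ℝ) ≤ |σ t - s| := abs_nonneg _
  have hxμ1 : |σ t - s| ≤ μ + 1 := by
    have hsplit : σ t - s = (σ t - t) + (t - s) := by ring
    calc |σ t - s| ≤ |σ t - t| + |t - s| := by rw [hsplit]; exact abs_add_le _ _
      _ ≤ μ + 1 := by
          rw [← hμdef, abs_sub_comm]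
          linarith [hst.le]
  -- continuity estimate for g
  have hgcont : |g s - g t| ≤ |g'| * δ + ε₁ * |σ t - s| := by
    have hgst : g s - g t = g' * (s - t)
        - (g (σ t) - g s - g' * (σ t - s)) := by rw [hjg]; ring
    rw [hgst]
    calc |g' * (s - t) - (g (σ t) - g s - g' * (σ t - s))|
        ≤ |g' * (s - t)| + |g (σ t) - g s - g' * (σ t - s)| := abs_sub _ _
      _ ≤ |g'| * δ + ε₁ * |σ t - s| := by
          rw [abs_mul]
          have := mul_le_mul_of_nonneg_left hst.le (abs_nonneg g')
          linarith
  have hfdiff : |f (σ t) - f s| ≤ (|f'| + ε₁) * |σ t - s| := by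
    have hfs : f (σ t) - f s = f' * (σ t - s)
        + (f (σ t) - f s - f' * (σ t - s)) := by ring
    rw [hfs]
    calc |f' * (σ t - s) + (f (σ t) - f s - f' * (σ t - s))|
        ≤ |f' * (σ t - s)| + |f (σ t) - f s - f' * (σ t - s)| := abs_add_le _ _
      _ ≤ (|f'| + ε₁) * |σ t - s| := by rw [abs_mul]; linarith
  -- key identity
  have hkey : f (σ t) * g (σ t) - f s * g s - (f' * g t + f (σ t) * g') * (σ t - s)
      = f (σ t) * (g (σ t) - g s - g' * (σ t - s))
        + g t * (f (σ t) - f s - f' * (σ t - s))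
        + (g s - g t) * (f (σ t) - f s) := by ring
  show |f (σ t) * g (σ t) - f s * g s - (f' * g t + f (σ t) * g') * (σ t - s)|
      ≤ ε * |σ t - s|
  rw [hkey]
  have h1 : |f (σ t) * (g (σ t) - g s - g' * (σ t - s))|
      ≤ |f (σ t)| * (ε₁ * |σ t - s|) := by
    rw [abs_mul]; exact mul_le_mul_of_nonneg_left hEg (abs_nonneg _)
  have h2 : |g t * (f (σ t) - f s - f' * (σ t - s))|
      ≤ |g t| * (ε₁ * |σ t - s|) := by
    rw [abs_mul]; exact mul_le_mul_of_nonneg_left hEf (abs_nonneg _)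
  have h3 : |(g s - g t) * (f (σ t) - f s)|
      ≤ (|g'| * δ + ε₁ * |σ t - s|) * ((|f'| + ε₁) * |σ t - s|) := by
    rw [abs_mul]
    apply mul_le_mul hgcont hfdiff (abs_nonneg _)
    have h4 : 0 ≤ |g'| * δ := mul_nonneg (abs_nonneg _) hδpos.le
    have h5 : 0 ≤ ε₁ * |σ t - s| := mul_nonneg hε₁pos.le hx0
    linarith
  have htri : |f (σ t) * (g (σ t) - g s - g' * (σ t - s))
        + g t * (f (σ t) - f s - f' * (σ t - s))
        + (g s - g t) * (f (σ t) - f s)|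
      ≤ |f (σ t) * (g (σ t) - g s - g' * (σ t - s))|
        + |g t * (f (σ t) - f s - f' * (σ t - s))|
        + |(g s - g t) * (f (σ t) - f s)| := by
    calc _ ≤ |f (σ t) * (g (σ t) - g s - g' * (σ t - s))
          + g t * (f (σ t) - f s - f' * (σ t - s))|
          + |(g s - g t) * (f (σ t) - f s)| := abs_add_le _ _
      _ ≤ _ := by
          gcongr
          exact abs_add_le _ _
  have harith := arith_core ε ε₁ δ (|σ t - s|) μ M (|f (σ t)| + |g t|) (|f'|) (|g'|)
    hx0 hxμ1 hμ0 hM1 hMA (by positivity) hMf (abs_nonneg _) hMg (abs_nonneg _)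
    hε₁pos hε₁le1 hδpos hε₁bound hδbound
  calc _ ≤ |f (σ t) * (g (σ t) - g s - g' * (σ t - s))|
        + |g t * (f (σ t) - f s - f' * (σ t - s))|
        + |(g s - g t) * (f (σ t) - f s)| := htri
    _ ≤ (|f (σ t)| + |g t|) * (ε₁ * |σ t - s|)
        + (|g'| * δ + ε₁ * |σ t - s|) * ((|f'| + ε₁) * |σ t - s|) := by
        nlinarith [h1, h2, h3]
    _ ≤ ε * |σ t - s| := harith

/-- For the planar system `x^Δ = y`, `y^Δ = -φ φ^σ x + (φ^Δ/φ) y` on a time scale,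
the matrix with columns `(cos_φ, -φ sin_φ)ᵀ` and `((1/φ(t₀)) sin_φ, (φ/φ(t₀)) cos_φ)ᵀ`
is a fundamental matrix solution: it solves the system and equals `I` at `t₀`. -/
theorem fundamental_matrix_trig
    (T : Set ℝ) (σ : ℝ → ℝ) (t₀ : ℝ) (ht₀ : t₀ ∈ T)
    (φ φΔ q : ℝ → ℝ) (hφne : ∀ t ∈ T, φ t ≠ 0)
    (hφΔ : ∀ t ∈ T, HasDeltaDerivAt T σ φ (φΔ t) t)
    (hq : ∀ t, q t = φ (σ t) * φ t)
    (cosφ sinφ : ℝ → ℝ)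
    (hcos0 : cosφ t₀ = 1) (hsin0 : sinφ t₀ = 0)
    (hcosΔ : ∀ t ∈ T, HasDeltaDerivAt T σ cosφ (-(φ t) * sinφ t) t)
    (hsinΔ : ∀ t ∈ T, HasDeltaDerivAt T σ sinφ (φ t * cosφ t) t) :
    -- entries of the matrix X
    (cosφ t₀ = 1 ∧ (-(φ t₀) * sinφ t₀) = 0 ∧
      (sinφ t₀ / φ t₀) = 0 ∧ (φ t₀ * cosφ t₀ / φ t₀) = 1) ∧
    -- first column solves the system
    (∀ t ∈ T,
      HasDeltaDerivAt T σ (fun u => cosφ u) (-(φ t) * sinφ t) t ∧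
      HasDeltaDerivAt T σ (fun u => -(φ u) * sinφ u)
        (-(q t) * cosφ t + (φΔ t / φ t) * (-(φ t) * sinφ t)) t) ∧
    -- second column solves the system
    (∀ t ∈ T,
      HasDeltaDerivAt T σ (fun u => sinφ u / φ t₀) (φ t * cosφ t / φ t₀) t ∧
      HasDeltaDerivAt T σ (fun u => φ u * cosφ u / φ t₀)
        (-(q t) * (sinφ t / φ t₀) + (φΔ t / φ t) * (φ t * cosφ t / φ t₀)) t) := by
  have hφ0 : φ t₀ ≠ 0 := hφne t₀ ht₀
  refine ⟨⟨hcos0, by rw [hsin0]; ring, by rw [hsin0]; simp,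
      by rw [hcos0, mul_one, div_self hφ0]⟩, fun t ht => ⟨hcosΔ t ht, ?_⟩,
      fun t ht => ⟨(hsinΔ t ht).div_const (φ t₀), ?_⟩⟩
  · have h := HasDeltaDerivAt.mul (g := sinφ) ht ((hφΔ t ht).neg) (hsinΔ t ht)
    exact h.congr_deriv (by rw [hq t]; field_simp [hφne t ht]; ring)
  · have h := (HasDeltaDerivAt.mul (g := cosφ) ht (hφΔ t ht) (hcosΔ t ht)).div_const (φ t₀)
    exact h.congr_deriv (by rw [hq t]; field_simp [hφne t ht]; ring)
end

section
/- For the hybrid periodic system x^ΔΔ + p(t)x^Δ + x = 0 on the 2π-periodic time scale 𝕋 = ⋃_{k∈ℤ} [2kπ, (2k+1)π], where p(t) = 0 on [2kπ, (2k+1)π) and p((2k+1)π) = 1/4, the trace of the monodromy matrix over one period is 𝒜 = π/4 − 2 and its determinant is ℬ = π² − π/4 + 1; since |𝒜/2 ± √((𝒜/2)² − ℬ)| = √ℬ > 1, the system is unstable. -/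
open Matrix

/-- System matrix on the continuous part `[2kπ, (2k+1)π)`, where `p = 0`. -/
noncomputable def Acont : Matrix (Fin 2) (Fin 2) ℝ := !![0, 1; -1, 0]

/-- System matrix at the scattered point `(2k+1)π`, where `p = 1/4`. -/
noncomputable def Ascat : Matrix (Fin 2) (Fin 2) ℝ := !![0, 1; -1, -(1/4)]

/-! On `[0, π]` the fundamental solution solves `x'' + x = 0`, and the half-period rotation
gives `Φ(π) = -I`; the jump at `π` then yields an explicit monodromy matrix `M`. Its
characteristic discriminant `𝒜² - 4ℬ` is negative, so both Floquet multipliers are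
non-real, complex conjugate, and of modulus `√(det M) > 1`. -/

open Set Real

section HarmonicOscillator

variable {f g : ℝ → ℝ} {a b : ℝ}

theorem sq_add_sq_eq_of_harmonic
    (hf : ∀ t ∈ Icc a b, HasDerivWithinAt f (g t) (Icc a b) t)
    (hg : ∀ t ∈ Icc a b, HasDerivWithinAt g (-f t) (Icc a b) t) :
    ∀ t ∈ Icc a b, f t ^ 2 + g t ^ 2 = f a ^ 2 + g a ^ 2 := by
  have hE : ∀ t ∈ Icc a b,
      HasDerivWithinAt (fun t => f t ^ 2 + g t ^ 2) 0 (Icc a b) t := fun t ht =>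
    (((hf t ht).pow 2).add ((hg t ht).pow 2)).congr_deriv (by simp; ring)
  exact constant_of_has_deriv_right_zero (fun t ht => (hE t ht).continuousWithinAt)
    fun t ht => (hE t (Ico_subset_Icc_self ht)).mono_of_mem_nhdsWithin (Icc_mem_nhdsGE_of_mem ht)

theorem eq_cos_sin_of_harmonic
    (hf : ∀ t ∈ Icc a b, HasDerivWithinAt f (g t) (Icc a b) t)
    (hg : ∀ t ∈ Icc a b, HasDerivWithinAt g (-f t) (Icc a b) t) :
    ∀ t ∈ Icc a b, f t = f a * cos (t - a) + g a * sin (t - a) ∧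
      g t = -(f a * sin (t - a)) + g a * cos (t - a) := by
  set u : ℝ → ℝ := fun t => f t - (f a * cos (t - a) + g a * sin (t - a))
  set v : ℝ → ℝ := fun t => g t - (-(f a * sin (t - a)) + g a * cos (t - a))
  have hsub : ∀ t, HasDerivAt (fun t => t - a) 1 t := fun t => (hasDerivAt_id t).sub_const a
  have hu : ∀ t ∈ Icc a b, HasDerivWithinAt u (v t) (Icc a b) t := fun t ht =>
    ((hf t ht).sub ((((hasDerivAt_cos _).comp t (hsub t)).const_mul (f a)).add
      (((hasDerivAt_sin _).comp t (hsub t)).const_mul (g a))).hasDerivWithinAt).congr_deriv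
      (by simp only [v]; ring)
  have hv : ∀ t ∈ Icc a b, HasDerivWithinAt v (-u t) (Icc a b) t := fun t ht =>
    ((hg t ht).sub ((((hasDerivAt_sin _).comp t (hsub t)).const_mul (f a)).neg.add
      (((hasDerivAt_cos _).comp t (hsub t)).const_mul (g a))).hasDerivWithinAt).congr_deriv
      (by simp only [u]; ring)
  intro t ht
  have hzero : u t ^ 2 + v t ^ 2 = 0 := by
    rw [sq_add_sq_eq_of_harmonic hu hv t ht]
    simp [u, v]
  have hut : u t = 0 := by nlinarith [sq_nonneg (u t), sq_nonneg (v t)]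
  have hvt : v t = 0 := by nlinarith [sq_nonneg (u t), sq_nonneg (v t)]
  exact ⟨sub_eq_zero.1 hut, sub_eq_zero.1 hvt⟩

end HarmonicOscillator

theorem norm_eq_sqrt_of_quadratic_eq_zero {T D : ℝ} (hdisc : T ^ 2 < 4 * D) {ρ : ℂ}
    (hρ : ρ ^ 2 - T * ρ + D = 0) : ‖ρ‖ = √D := by
  set σ := (starRingEnd ℂ) ρ
  have hσ : σ ^ 2 - T * σ + D = 0 := by
    simpa [σ, map_sub, map_add, map_mul, map_pow] using congrArg (starRingEnd ℂ) hρ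
  have hreal : ρ.im ≠ 0 := by
    intro him
    have hre : ρ.re ^ 2 - T * ρ.re + D = 0 := by
      simpa [pow_two, him] using congrArg Complex.re hρ
    nlinarith [sq_nonneg (2 * ρ.re - T)]
  have hne : ρ - σ ≠ 0 := by
    rw [sub_ne_zero]
    exact fun h => hreal (Complex.conj_eq_iff_im.1 h.symm)
  have hsum : ρ + σ = T := by
    have : (ρ - σ) * (ρ + σ - T) = 0 := by linear_combination hρ - hσ
    exact sub_eq_zero.1 ((mul_eq_zero.1 this).resolve_left hne)
  have hprod : ρ * σ = D := by linear_combination -hρ + ρ * hsum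
  rw [Complex.mul_conj] at hprod
  rw [Complex.norm_def, Complex.ofReal_injective hprod]

section Monodromy

variable {Φ : ℝ → Matrix (Fin 2) (Fin 2) ℝ}

theorem fundamental_pi_eq_neg_one (hΦ0 : Φ 0 = 1)
    (hode : ∀ t ∈ Icc (0 : ℝ) π, ∀ i j,
      HasDerivWithinAt (fun u => Φ u i j) ((Acont * Φ t) i j) (Icc 0 π) t) :
    Φ π = -1 := by
  have hπ : ∀ j, Φ π 0 j = -Φ 0 0 j ∧ Φ π 1 j = -Φ 0 1 j := fun j => by
    have hsol := eq_cos_sin_of_harmonic (f := fun u => Φ u 0 j) (g := fun u => Φ u 1 j)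
      (fun t ht => by simpa [Acont, mul_apply, Fin.sum_univ_two] using hode t ht 0 j)
      (fun t ht => by simpa [Acont, mul_apply, Fin.sum_univ_two] using hode t ht 1 j)
      π ⟨pi_pos.le, le_rfl⟩
    simpa using hsol
  ext i j
  fin_cases i
  · simpa [hΦ0] using (hπ j).1
  · simpa [hΦ0] using (hπ j).2

theorem monodromy_eq (hΦpi : Φ π = -1)
    (hjump : Φ (2 * π) = Φ π + π • (Ascat * Φ π)) :
    Φ (2 * π) = !![-1, -π; π, -1 + π / 4] := by
  rw [hjump, hΦpi]
  ext i j
  fin_cases i <;> fin_cases j <;> norm_num [Ascat, div_eq_mul_inv]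

end Monodromy

/-- For the hybrid system `x^ΔΔ + p x^Δ + x = 0` on `𝕋 = ⋃ₖ [2kπ, (2k+1)π]` with
`p = 0` on `[2kπ,(2k+1)π)` and `p((2k+1)π) = 1/4`: the fundamental solution `Φ`
(with `Φ(0) = I`) satisfies `Φ' = Acont Φ` on `[0,π]` and the scattered-point jump
`Φ(2π) = Φ(π) + π (Ascat Φ(π))` (graininess `μ(π) = π`).  Its monodromy matrix has
trace `𝒜 = π/4 - 2` and determinant `ℬ = π² - π/4 + 1`; every Floquet multiplier
has modulus `√ℬ > 1`, so the system is unstable. -/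
theorem hybrid_example_unstable (Φ : ℝ → Matrix (Fin 2) (Fin 2) ℝ)
    (hΦ0 : Φ 0 = 1)
    (hode : ∀ t ∈ Set.Icc (0 : ℝ) Real.pi, ∀ i j,
      HasDerivWithinAt (fun u => Φ u i j) ((Acont * Φ t) i j) (Set.Icc 0 Real.pi) t)
    (hjump : Φ (2 * Real.pi) = Φ Real.pi + Real.pi • (Ascat * Φ Real.pi)) :
    (Φ (2 * Real.pi)).trace = Real.pi / 4 - 2 ∧
    (Φ (2 * Real.pi)).det = Real.pi ^ 2 - Real.pi / 4 + 1 ∧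
    (∀ ρ : ℂ, ρ ^ 2 - ((Φ (2 * Real.pi)).trace : ℂ) * ρ
        + ((Φ (2 * Real.pi)).det : ℂ) = 0 →
      ‖ρ‖ = Real.sqrt ((Φ (2 * Real.pi)).det)) ∧
    1 < Real.sqrt ((Φ (2 * Real.pi)).det) := by
  have hM := monodromy_eq (fundamental_pi_eq_neg_one hΦ0 hode) hjump
  have htr : (Φ (2 * π)).trace = π / 4 - 2 := by
    rw [hM, trace_fin_two_of]; ring
  have hdet : (Φ (2 * π)).det = π ^ 2 - π / 4 + 1 := by
    rw [hM, det_fin_two_of]; ring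
  have hpi := pi_gt_three
  refine ⟨htr, hdet, fun ρ hρ => norm_eq_sqrt_of_quadratic_eq_zero ?_ hρ, ?_⟩
  · rw [htr, hdet]; nlinarith
  · rw [hdet, lt_sqrt zero_le_one]; nlinarith
end
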